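/- arXiv:2010.04499 — 2 statements merged into one kernel-verified Lean document; each statement's English description precedes it below -/
import Mathlib

section
/- Let G be a finite group with normal subgroups N ≤ H ≤ G such that H ⊴ G, G/H is cyclic, and G/N is abelian. Fix a ∈ G whose image generates G/H. Let χ be a G-invariant irreducible complex character of N. Then χ extends to an irreducible character of G if and only if there exists an extension ψ ∈ Irr(H) of χ with ψᵃ = ψ (i.e., ψ is invariant under conjugation by a). -/
/-!
Restricting an irreducible extension of `χ` to `H` gives an extension `ψ`; it is irreducible
because its restriction `χ` to `N` already is, and `a`-invariant because characters are class
functions.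

Conversely, let `ρ : H → GL(W)` afford an `a`-invariant `ψ ∈ Irr(H)`. Then `ρ` and its
`a`-conjugate are isomorphic, via some `T`. With `m = |G/H|`, both `T ^ m` and `ρ(a ^ m)`
conjugate `ρ(h)` to `ρ(a ^ m * h * a⁻ᵐ)`, so by Schur `T ^ m = c • ρ(a ^ m)`; rescaling `T` by
an `m`-th root of `c` gives `S` with `S ^ m = ρ(a ^ m)`, and `a ^ k * h ↦ S ^ k * ρ(h)` is then
a well-defined representation of `G` extending `ρ`.
-/

/-- `χ` is the character of an irreducible (finite-dimensional) complex
representation of `G`. -/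
def IsIrrChar {G : Type} [Group G] (χ : G → ℂ) : Prop :=
  ∃ V : FDRep ℂ G, CategoryTheory.Simple V ∧ ∀ g : G, V.character g = χ g

open CategoryTheory Module

section CyclicQuotient

variable {G M : Type*} [Group G] [Group M] {H : Subgroup G} [H.Normal] {a : G}

theorem map_conjNormal_zpow (ρ : H →* M) {S : M}
    (hconj : ∀ h, ρ (MulAut.conjNormal a h) = S * ρ h * S⁻¹) (k : ℤ) (h : H) :
    ρ (MulAut.conjNormal (a ^ k) h) = S ^ k * ρ h * (S ^ k)⁻¹ := by
  induction k using Int.induction_on generalizing h with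
  | zero => simp
  | succ k ih =>
    rw [zpow_add_one, map_mul, MulAut.mul_apply, ih, hconj]
    group
  | pred k ih =>
    have hinv : ρ (MulAut.conjNormal a⁻¹ h) = S⁻¹ * ρ h * S := by
      have := hconj (MulAut.conjNormal a⁻¹ h)
      rw [← MulAut.mul_apply, ← map_mul, mul_inv_cancel, map_one, MulAut.one_apply] at this
      rw [this]
      group
    rw [sub_eq_add_neg, zpow_add, zpow_neg_one, map_mul, MulAut.mul_apply, ih, hinv]
    group

theorem exists_monoidHom_extension_of_cyclic_quotient
    (hgen : ∀ x : G ⧸ H, x ∈ Subgroup.zpowers (a : G ⧸ H))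
    (ρ : H →* M) {S : M} (hconj : ∀ h, ρ (MulAut.conjNormal a h) = S * ρ h * S⁻¹) {b : H}
    (hb : (b : G) = a ^ orderOf (a : G ⧸ H)) (hpow : S ^ orderOf (a : G ⧸ H) = ρ b) :
    ∃ Φ : G →* M, ∀ h : H, Φ h = ρ h := by
  -- `G` is the quotient of `H ⋊ ℤ` by the kernel of `π : (h, k) ↦ h * a ^ k`, and
  -- `Φ : (h, k) ↦ ρ h * S ^ k` kills that kernel because `a ^ k ∈ H` forces `orderOf ∣ k`.
  let φ : Multiplicative ℤ →* MulAut H := MulAut.conjNormal.comp (zpowersHom G a)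
  let π : H ⋊[φ] Multiplicative ℤ →* G :=
    SemidirectProduct.lift H.subtype (zpowersHom G a) fun k => by
      ext h
      simp only [φ, MonoidHom.comp_apply, MulEquiv.coe_toMonoidHom, Subgroup.coe_subtype,
        MulAut.conjNormal_apply, MulAut.conj_apply]
  let Φ : H ⋊[φ] Multiplicative ℤ →* M :=
    SemidirectProduct.lift ρ (zpowersHom M S) fun k => by
      ext h
      simp only [φ, MonoidHom.comp_apply, MulEquiv.coe_toMonoidHom, zpowersHom_apply,
        map_conjNormal_zpow ρ hconj, MulAut.conj_apply]
  have hπ : Function.Surjective π := by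
    intro g
    obtain ⟨k, hk⟩ := Subgroup.mem_zpowers_iff.mp (hgen g)
    have hmem : g * (a ^ k)⁻¹ ∈ H := by
      rw [← QuotientGroup.eq_one_iff, QuotientGroup.mk_mul, QuotientGroup.mk_inv,
        QuotientGroup.mk_zpow, hk, mul_inv_cancel]
    exact ⟨⟨⟨_, hmem⟩, Multiplicative.ofAdd k⟩, by simp [π]⟩
  have hker : π.ker ≤ Φ.ker := by
    rintro ⟨n, k⟩ hx
    have hx' : (n : G) * a ^ k.toAdd = 1 := by simpa [π] using hx
    obtain ⟨q, hq⟩ : (orderOf (a : G ⧸ H) : ℤ) ∣ k.toAdd := by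
      rw [orderOf_dvd_iff_zpow_eq_one, ← QuotientGroup.mk_zpow, QuotientGroup.eq_one_iff,
        eq_inv_of_mul_eq_one_right hx']
      exact inv_mem n.2
    have hbq : n * b ^ q = 1 :=
      Subtype.ext (by simp [hb, ← zpow_natCast, ← zpow_mul, ← hq, hx'])
    change ρ n * zpowersHom M S k = 1
    rw [zpowersHom_apply, hq, zpow_mul, zpow_natCast, hpow, ← map_zpow, ← map_mul, hbq,
      map_one]
  refine ⟨π.liftOfRightInverse _ (Function.rightInverse_surjInv hπ) ⟨Φ, hker⟩, fun h => ?_⟩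
  simpa [π, Φ] using π.liftOfRightInverse_comp_apply _ _ ⟨Φ, hker⟩ (SemidirectProduct.inl h)

end CyclicQuotient

theorem Units.exists_pow_eq_of_pow_eq_smul {K E : Type*} [Field K] [IsAlgClosed K] [Ring E]
    [Algebra K E] {T A : Eˣ} {m : ℕ} (hm : m ≠ 0) {c : K} (h : (T : E) ^ m = c • (A : E)) :
    ∃ S : Eˣ, S ^ m = A ∧ ∀ x : Eˣ, S * x * S⁻¹ = T * x * T⁻¹ := by
  rcases eq_or_ne c 0 with rfl | hc
  · have : Subsingleton E := by
      have hunit := (T ^ m).isUnit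
      rw [Units.val_pow_eq_pow_val, h, zero_smul, isUnit_zero_iff] at hunit
      exact subsingleton_of_zero_eq_one hunit
    exact ⟨T, Subsingleton.elim _ _, fun _ => rfl⟩
  obtain ⟨z, hz⟩ := IsAlgClosed.exists_pow_nat_eq c (Nat.pos_of_ne_zero hm)
  have hz0 : z ≠ 0 := by rintro rfl; exact hc (by simp [← hz, hm])
  refine ⟨(Units.mk0 z hz0)⁻¹ • T, Units.ext ?_, fun x => Units.ext ?_⟩
  · rw [Units.val_pow_eq_pow_val, Units.val_smul, Units.smul_def, smul_pow, h, smul_smul]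
    simp [hz, hc]
  · simp only [Units.val_mul, Units.smul_inv, Units.val_smul, Units.smul_def, smul_mul_assoc,
      mul_smul_comm, smul_smul]
    simp [hz0]

namespace FDRep

variable {K L : Type} [Group K] [Group L]

abbrev res (f : K →* L) (V : FDRep ℂ L) : FDRep ℂ K := (Action.res _ f).obj V

theorem simple_of_simple_res [Finite L] (f : K →* L) (V : FDRep ℂ L) [Simple (V.res f)] :
    Simple V := by
  rw [simple_iff_end_is_rank_one]
  refine le_antisymm ?_ (finrank_pos_iff_exists_ne_zero.mpr ⟨𝟙 V, fun h => ?_⟩)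
  · calc finrank ℂ (V ⟶ V) ≤ finrank ℂ (V.res f ⟶ V.res f) :=
          LinearMap.finrank_le_finrank_of_injective
            (f := (Action.res _ f).mapLinearMap ℂ) (Action.res _ f).map_injective
      _ = 1 := finrank_endomorphism_simple_eq_one ℂ _
  · exact id_nonzero (V.res f) (by simpa using congrArg (Action.res _ f).map h)

theorem simple_of_character_eq [Finite K] {V U : FDRep ℂ K} [Simple U]
    (h : ∀ k, V.character k = U.character k) : Simple V := by
  have := Fintype.ofFinite K
  simpa [simple_iff_char_is_norm_one, h] using (simple_iff_char_is_norm_one U).mp inferInstance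

theorem simple_of_character_comp_eq [Finite K] [Finite L] (f : K →* L) {V : FDRep ℂ L}
    {U : FDRep ℂ K} [Simple U] (h : ∀ k, V.character (f k) = U.character k) : Simple V :=
  have : Simple (V.res f) := simple_of_character_eq h
  simple_of_simple_res f V

theorem nonempty_iso_of_character_eq [Finite K] {V U : FDRep ℂ K} [Simple V] [Simple U]
    (h : ∀ k, V.character k = U.character k) : Nonempty (V ≅ U) := by
  have := Fintype.ofFinite K
  have := invertibleOfNonzero (NeZero.ne (Nat.card K : ℂ))
  by_contra hne
  have hVU := char_orthonormal V U
  rw [if_neg hne] at hVU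
  simp_rw [h] at hVU
  rw [char_orthonormal U U, if_pos ⟨Iso.refl U⟩] at hVU
  exact one_ne_zero hVU

theorem exists_eq_smul_one_of_commute (W : FDRep ℂ K) [Simple W] {f : Module.End ℂ W}
    (hf : ∀ k, f * W.ρ k = W.ρ k * f) : ∃ c : ℂ, f = c • 1 := by
  let φ : W ⟶ W := ⟨FGModuleCat.ofHom f, fun k => by exact congrArg FGModuleCat.ofHom (hf k)⟩
  obtain ⟨c, hc⟩ := endomorphism_simple_eq_smul_id ℂ φ
  exact ⟨c, (congrArg (fun φ => φ.hom.hom.hom) hc).symm⟩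

theorem exists_conj_eq_of_character_comp_eq [Finite K] (W : FDRep ℂ K) [Simple W]
    (σ : MulAut K) (h : ∀ k, W.character (σ k) = W.character k) :
    ∃ T : (Module.End ℂ W)ˣ, ∀ k, Representation.asGroupHom W.ρ (σ k) =
      T * Representation.asGroupHom W.ρ k * T⁻¹ := by
  have : Simple (W.res σ.toMonoidHom) := simple_of_character_eq h
  obtain ⟨i⟩ := nonempty_iso_of_character_eq (V := W) (U := W.res σ.toMonoidHom)
    fun k => (h k).symm
  let e := isoToLinearEquiv i
  exact ⟨(LinearMap.GeneralLinearGroup.generalLinearEquiv ℂ W).symm e,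
    fun k => Units.ext (Iso.conj_ρ i k)⟩

theorem exists_simple_extension_of_cyclic_quotient {G : Type} [Group G] [Finite G]
    {H : Subgroup G} [H.Normal] {a : G} (hgen : ∀ x : G ⧸ H, x ∈ Subgroup.zpowers (a : G ⧸ H))
    (W : FDRep ℂ H) [Simple W] (hinv : ∀ h, W.character (MulAut.conjNormal a h) = W.character h) :
    ∃ X : FDRep ℂ G, Simple X ∧ ∀ h : H, X.character h = W.character h := by
  set ρ := Representation.asGroupHom W.ρ
  set m := orderOf (a : G ⧸ H)
  obtain ⟨T, hT⟩ := W.exists_conj_eq_of_character_comp_eq _ hinv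
  let b : H := ⟨a ^ m, by
    rw [← QuotientGroup.eq_one_iff, QuotientGroup.mk_pow, pow_orderOf_eq_one]⟩
  have hcomm : ∀ h, (ρ b)⁻¹ * T ^ m * ρ h = ρ h * ((ρ b)⁻¹ * T ^ m) := by
    intro h
    have hb : MulAut.conjNormal (a ^ (m : ℤ)) h = b * h * b⁻¹ :=
      Subtype.ext (by rw [MulAut.conjNormal_apply]; simp [b])
    have hTm := map_conjNormal_zpow ρ hT m h
    rw [hb, map_mul, map_mul, map_inv, zpow_natCast] at hTm
    rw [mul_assoc, mul_inv_eq_iff_eq_mul.mp hTm.symm]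
    group
  obtain ⟨c, hc⟩ := W.exists_eq_smul_one_of_commute (f := ↑((ρ b)⁻¹ * T ^ m)) fun h => by
    simpa [ρ, Representation.asGroupHom_apply] using congrArg Units.val (hcomm h)
  have hTm : (T : Module.End ℂ W) ^ m = c • (ρ b : Module.End ℂ W) := by
    calc (T : Module.End ℂ W) ^ m = ρ b * ↑((ρ b)⁻¹ * T ^ m) := by simp
      _ = c • (ρ b : Module.End ℂ W) := by rw [hc, mul_smul_comm, mul_one]
  obtain ⟨S, hSm, hS⟩ := Units.exists_pow_eq_of_pow_eq_smul (orderOf_pos _).ne' hTm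
  obtain ⟨Φ, hΦ⟩ := exists_monoidHom_extension_of_cyclic_quotient hgen ρ (S := S)
    (fun h => by rw [hT, hS]) (b := b) rfl hSm
  let X := FDRep.of ((Units.coeHom _).comp Φ)
  have hX : ∀ h : H, X.character h = W.character h := fun h => by
    simp [X, FDRep.character, hΦ, ρ, Representation.asGroupHom_apply]
  exact ⟨X, simple_of_character_comp_eq H.subtype hX, hX⟩

end FDRep

theorem stmt11_general {G : Type} [Group G] [Finite G] (N H : Subgroup G)
    [hH : H.Normal] (hNH : N ≤ H) (a : G)
    (hgen : ∀ x : G ⧸ H, x ∈ Subgroup.zpowers ((a : G ⧸ H)))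
    (χ : N → ℂ) (hχ : IsIrrChar χ) :
    (∃ χt : G → ℂ, IsIrrChar χt ∧ ∀ n : N, χt ↑n = χ n) ↔
      ∃ ψ : H → ℂ, IsIrrChar ψ ∧ (∀ n : N, ψ ⟨↑n, hNH n.2⟩ = χ n) ∧
        (∀ h : H, ψ ⟨a * ↑h * a⁻¹, hH.conj_mem ↑h h.2 a⟩ = ψ h) := by
  obtain ⟨U, hU, hUχ⟩ := hχ
  constructor
  · rintro ⟨χt, ⟨V, hV, hVχt⟩, hVχ⟩
    have : Simple (V.res H.subtype) := FDRep.simple_of_character_comp_eq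
      (Subgroup.inclusion hNH) (U := U) fun n => (hVχt n).trans ((hVχ n).trans (hUχ n).symm)
    exact ⟨_, ⟨_, this, fun _ => rfl⟩, fun n => (hVχt n).trans (hVχ n),
      fun h => V.char_conj h a⟩
  · rintro ⟨ψ, ⟨W, hW, hWψ⟩, hψχ, hψa⟩
    obtain ⟨X, hX, hXW⟩ :=
      FDRep.exists_simple_extension_of_cyclic_quotient hgen W fun h => by
        rw [hWψ, hWψ, ← hψa h]
        rfl
    exact ⟨X.character, ⟨X, hX, fun _ => rfl⟩,
      fun n => (hXW ⟨n, hNH n.2⟩).trans ((hWψ _).trans (hψχ n))⟩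

theorem stmt11 {G : Type} [Group G] [Finite G] (N H : Subgroup G)
    [hN : N.Normal] [hH : H.Normal] (hNH : N ≤ H) (a : G)
    (hgen : ∀ x : G ⧸ H, x ∈ Subgroup.zpowers ((a : G ⧸ H)))
    (habel : ∀ x y : G ⧸ N, x * y = y * x)
    (χ : N → ℂ) (hχ : IsIrrChar χ)
    (hinv : ∀ (g : G) (n : N), χ ⟨g * ↑n * g⁻¹, hN.conj_mem ↑n n.2 g⟩ = χ n) :
    (∃ χt : G → ℂ, IsIrrChar χt ∧ ∀ n : N, χt ↑n = χ n) ↔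
      ∃ ψ : H → ℂ, IsIrrChar ψ ∧ (∀ n : N, ψ ⟨↑n, hNH n.2⟩ = χ n) ∧
        (∀ h : H, ψ ⟨a * ↑h * a⁻¹, hH.conj_mem ↑h h.2 a⟩ = ψ h) :=
  stmt11_general N H (hH := hH) hNH a hgen χ hχ
end

section
/- Let G be a finite group, N ⊴ G, and let χ̃ ∈ Irr(G) be an extension of χ ∈ Irr(N). Let λ be a linear character of G trivial on N, i.e., a linear character of G/N inflated to G. Then χ̃·λ is again an irreducible character of G extending χ, and χ̃·λ = χ̃ if and only if λ is trivial. -/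
open CategoryTheory Limits Module

noncomputable section

section FiniteDimensionalEnd

variable {k C : Type*} [Field k] [Category* C] [Preadditive C] [Linear k C] {X : C}

theorem CategoryTheory.id_ne_zero_of_finrank_end_eq_one (h : finrank k (X ⟶ X) = 1) :
    𝟙 X ≠ 0 := by
  intro h0
  have : Subsingleton (X ⟶ X) :=
    ⟨fun f g => by rw [← Category.comp_id f, ← Category.comp_id g, h0, comp_zero, comp_zero]⟩
  simp [finrank_zero_of_subsingleton] at h

theorem CategoryTheory.exists_smul_id_eq_of_finrank_end_eq_one (h : finrank k (X ⟶ X) = 1)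
    (f : X ⟶ X) : ∃ c : k, c • 𝟙 X = f :=
  (finrank_eq_one_iff_of_nonzero' _ (id_ne_zero_of_finrank_end_eq_one h)).mp h f

end FiniteDimensionalEnd

namespace FDRep

section Twist

variable {k G : Type*} [CommRing k] [Monoid G]

def twist (V : FDRep k G) (lam : G →* kˣ) : FDRep k G :=
  FDRep.of
    { toFun g := (lam g : k) • V.ρ g
      map_one' := by simp
      map_mul' g h := by simp only [map_mul, Units.val_mul, smul_mul_smul_comm] }

@[simp]
lemma twist_ρ (V : FDRep k G) (lam : G →* kˣ) (g : G) :
    (V.twist lam).ρ g = (lam g : k) • V.ρ g := rfl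

lemma hom_comm_apply {V W : FDRep k G} (f : V ⟶ W) (g : G) (x : V) :
    f.hom (V.ρ g x) = W.ρ g (f.hom x) :=
  congr_arg (fun φ => φ.hom x) (f.comm g)

lemma nontrivial_of_id_ne_zero {V : FDRep k G} (h : 𝟙 V ≠ 0) : Nontrivial V := by
  by_contra hV
  rw [not_nontrivial_iff_subsingleton] at hV
  exact h (by ext x; exact Subsingleton.elim _ _)

def twistFunctor (lam : G →* kˣ) : FDRep k G ⥤ FDRep k G where
  obj V := V.twist lam
  map {V W} f :=
    { hom := f.hom
      comm g := by
        ext x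
        change f.hom ((lam g : k) • V.ρ g x) = (lam g : k) • W.ρ g (f.hom x)
        rw [map_smul]
        exact congr_arg _ (hom_comm_apply f g x) }

def twistTwistIso (V : FDRep k G) {lam mu : G →* kˣ} (h : lam * mu = 1) :
    (V.twist lam).twist mu ≅ V :=
  Action.mkIso (Iso.refl _) fun g => by
    ext x
    change (mu g : k) • (lam g : k) • V.ρ g x = V.ρ g x
    rw [smul_smul, ← Units.val_mul, mul_comm, ← MonoidHom.mul_apply, h]
    simp

def twistEquivalence (lam : G →* kˣ) : FDRep k G ≌ FDRep k G :=
  .mk (twistFunctor lam) (twistFunctor lam⁻¹)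
    (NatIso.ofComponents fun V => (V.twistTwistIso (mul_inv_cancel lam)).symm)
    (NatIso.ofComponents fun V => V.twistTwistIso (inv_mul_cancel lam))

instance simple_twist (V : FDRep k G) [Simple V] (lam : G →* kˣ) : Simple (V.twist lam) :=
  simple_obj (twistEquivalence lam).functor V

def resTwistIso {H : Type*} [Monoid H] (f : H →* G) (V : FDRep k G) {lam : G →* kˣ}
    (hlam : ∀ h, lam (f h) = 1) :
    (Action.res _ f).obj (V.twist lam) ≅ (Action.res _ f).obj V :=
  Action.mkIso (Iso.refl _) fun h => by
    ext x
    change (lam (f h) : k) • V.ρ (f h) x = V.ρ (f h) x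
    rw [hlam, Units.val_one, one_smul]

end Twist

section Field

variable {k G : Type*} [Field k]

lemma char_twist [Monoid G] (V : FDRep k G) (lam : G →* kˣ) (g : G) :
    (V.twist lam).character g = lam g * V.character g :=
  (LinearMap.trace k V).map_smul (lam g : k) (V.ρ g)

variable [Group G]

lemma eq_one_of_iso_twist_of_hom_eq_smul {V : FDRep k G} {lam : G →* kˣ} (i : V ≅ V.twist lam)
    {c : k} (hc : ∀ x, i.hom.hom x = c • x) {x : V} (hx : x ≠ 0) : lam = 1 := by
  have hc0 : c ≠ 0 := by
    rintro rfl
    refine hx ((isoToLinearEquiv i).injective ?_)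
    change i.hom.hom x = _
    rw [hc, zero_smul]
    exact (map_zero _).symm
  ext g
  obtain ⟨y, rfl⟩ : ∃ y, V.ρ g y = x := ⟨V.ρ g⁻¹ x, by simp [← Module.End.mul_apply, ← map_mul]⟩
  have hscalar : c • V.ρ g y = (lam g * c : k) • V.ρ g y := by
    rw [← hc, hom_comm_apply, hc]
    change (lam g : k) • V.ρ g (c • y) = _
    rw [map_smul, mul_smul]
  simpa [hc0] using smul_left_injective k hx hscalar

lemma eq_one_of_iso_twist {H : Type*} [Monoid H] (f : H →* G) {V : FDRep k G}
    (hV : finrank k ((Action.res _ f).obj V ⟶ (Action.res _ f).obj V) = 1)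
    {lam : G →* kˣ} (hlam : ∀ h, lam (f h) = 1) (i : V ≅ V.twist lam) : lam = 1 := by
  obtain ⟨c, hc⟩ := exists_smul_id_eq_of_finrank_end_eq_one hV
    ((Action.res _ f).map i.hom ≫ (resTwistIso f V hlam).hom)
  have : Nontrivial V :=
    nontrivial_of_id_ne_zero (V := (Action.res _ f).obj V) (id_ne_zero_of_finrank_end_eq_one hV)
  obtain ⟨x, hx⟩ := exists_ne (0 : V)
  exact eq_one_of_iso_twist_of_hom_eq_smul i (fun y => (congr_arg (fun φ => φ.hom y) hc).symm) hx

variable [Fintype G] [CharZero k]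

lemma finrank_hom_eq_of_character_eq {V V' W W' : FDRep k G} (hV : V.character = V'.character)
    (hW : W.character = W'.character) : finrank k (V ⟶ W) = finrank k (V' ⟶ W') := by
  have : Invertible (Nat.card G : k) := invertibleOfNonzero (Nat.cast_ne_zero.mpr Nat.card_pos.ne')
  apply Nat.cast_injective (R := k)
  rw [← scalar_product_char_eq_finrank_equivariant, ← scalar_product_char_eq_finrank_equivariant,
    hV, hW]

lemma nonempty_iso_of_character_eq_s17 [IsAlgClosed k] {V W : FDRep k G} [Simple V] [Simple W]
    (h : V.character = W.character) : Nonempty (V ≅ W) := by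
  have hrank : finrank k (V ⟶ W) = 1 := by
    rw [finrank_hom_eq_of_character_eq rfl h.symm, finrank_endomorphism_simple_eq_one]
  obtain ⟨f, hf⟩ := finrank_pos_iff_exists_ne_zero.mp (hrank ▸ Nat.one_pos)
  have := (isIso_iff_nonzero f).mpr hf
  exact ⟨asIso f⟩

end Field

end FDRep

end

open FDRep in
theorem stmt17_general {G : Type} [Group G] [Finite G] (N : Subgroup G)
    (χ : N → ℂ) (hχ : IsIrrChar χ)
    (χt : G → ℂ) (hχt : IsIrrChar χt) (hres : ∀ n : N, χt ↑n = χ n)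
    (lam : G →* ℂˣ) (hlam : ∀ n ∈ N, lam n = 1) :
    IsIrrChar (fun g => χt g * (lam g : ℂ)) ∧
      (∀ n : N, χt ↑n * (lam ↑n : ℂ) = χ n) ∧
      ((fun g => χt g * (lam g : ℂ)) = χt ↔ lam = 1) := by
  have := Fintype.ofFinite G
  have := Fintype.ofFinite N
  obtain ⟨V, _, hVχ⟩ := hχt
  obtain ⟨W, _, hWχ⟩ := hχ
  have hVχ_twist : (V.twist lam).character = fun g => χt g * lam g :=
    funext fun g => by rw [char_twist, hVχ, mul_comm]
  refine ⟨⟨V.twist lam, inferInstance, congrFun hVχ_twist⟩,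
    fun n => by rw [hlam n n.2, Units.val_one, mul_one, hres], fun h => ?_, fun h => by simp [h]⟩
  have hres_end :
      finrank ℂ ((Action.res _ N.subtype).obj V ⟶ (Action.res _ N.subtype).obj V) = 1 := by
    have hresχ : character ((Action.res _ N.subtype).obj V) = W.character :=
      funext fun n => (hVχ n).trans ((hres n).trans (hWχ n).symm)
    rw [finrank_hom_eq_of_character_eq hresχ hresχ, finrank_endomorphism_simple_eq_one]
  obtain ⟨i⟩ := nonempty_iso_of_character_eq_s17 (V := V) (W := V.twist lam)
    (by rw [hVχ_twist, h]; exact funext hVχ)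
  exact eq_one_of_iso_twist N.subtype hres_end (fun n => hlam n n.2) i

theorem stmt17 {G : Type} [Group G] [Finite G] (N : Subgroup G) [hN : N.Normal]
    (χ : N → ℂ) (hχ : IsIrrChar χ)
    (χt : G → ℂ) (hχt : IsIrrChar χt) (hres : ∀ n : N, χt ↑n = χ n)
    (lam : G →* ℂˣ) (hlam : ∀ n ∈ N, lam n = 1) :
    IsIrrChar (fun g => χt g * (lam g : ℂ)) ∧
      (∀ n : N, χt ↑n * (lam ↑n : ℂ) = χ n) ∧
      ((fun g => χt g * (lam g : ℂ)) = χt ↔ lam = 1) :=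
  stmt17_general N χ hχ χt hχt hres lam hlam
end
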